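/- arXiv:2411.18458 — 2 statements merged into one kernel-verified Lean document; each statement's English description precedes it below -/
import Mathlib

section
/- Let d ≥ 3 and let V be a B∞ potential with constant C₀. Then for every q ∈ (1, ∞) there exists a constant C > 0, depending only on d, q and C₀, such that for every x ∈ ℝ^d and all radii 0 < r ≤ R < ∞ one has ψ(x, r) ≤ C (r/R)^{2 − d/q} ψ(x, R). -/
open MeasureTheory Metric Set

noncomputable section

/-- `ℝ^d` as Euclidean space. -/
abbrev Ed (d : ℕ) := EuclideanSpace ℝ (Fin d)

/-- The `B_∞` condition with constant `C₀`:
`ess sup_B V ≤ C₀ ⨍_B V` for every ball `B ⊆ ℝ^d`. -/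
def BInfty (d : ℕ) (C₀ : ℝ) (V : Ed d → ℝ) : Prop :=
  ∀ (x : Ed d) (r : ℝ), 0 < r →
    ∀ᵐ y ∂(volume.restrict (ball x r)), V y ≤ C₀ * ⨍ z in ball x r, V z

/-- `ψ(x,r) = r^{2-d} ∫_{B(x,r)} V`. -/
def psiFun (d : ℕ) (V : Ed d → ℝ) (x : Ed d) (r : ℝ) : ℝ :=
  r ^ ((2 : ℝ) - d) * ∫ y in ball x r, V y

/-- "Good potential": measurable, locally bounded, positive a.e., `B_∞` with constant `C₀`. -/
def GoodV (d : ℕ) (C₀ : ℝ) (V : Ed d → ℝ) : Prop :=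
  Measurable V ∧ (∀ x : Ed d, ∃ r > 0, ∃ K : ℝ, ∀ y ∈ ball x r, |V y| ≤ K) ∧
    (∀ᵐ x : Ed d ∂volume, 0 < V x) ∧ BInfty d C₀ V

/-! The `B∞` condition bounds `V` on `B(x,R)` by `C₀ ⨍_{B(x,R)} V`, so integrating over `B(x,r)`
gives `∫_{B(x,r)} V ≤ C₀ (r/R)^d ∫_{B(x,R)} V`, i.e. `ψ(x,r) ≤ C₀ (r/R)² ψ(x,R)`. As `r/R ≤ 1`
and `2 - d/q ≤ 2`, this is stronger than the claimed bound, with `C = C₀`. -/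

section AddHaar

variable {E : Type*} [NormedAddCommGroup E] [NormedSpace ℝ E] [MeasurableSpace E] [BorelSpace E]
  [FiniteDimensional ℝ E] (μ : Measure E) [μ.IsAddHaarMeasure]

theorem MeasureTheory.Measure.addHaar_real_ball_eq_div_pow_mul (x : E) {r R : ℝ} (hr : 0 < r) (hR : 0 < R) :
    μ.real (ball x r) = (r / R) ^ Module.finrank ℝ E * μ.real (ball x R) := by
  simp only [measureReal_def, Measure.addHaar_ball_of_pos μ x hr, Measure.addHaar_ball_of_pos μ x hR,
    ENNReal.toReal_mul, ENNReal.toReal_ofReal (pow_nonneg hr.le _),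
    ENNReal.toReal_ofReal (pow_nonneg hR.le _)]
  rw [div_pow, ← mul_assoc, div_mul_cancel₀ _ (pow_pos hR _).ne']

theorem setIntegral_ball_le_of_ae_le_setAverage {f : E → ℝ} {c : ℝ} {x : E} {r R : ℝ}
    (hr : 0 < r) (hrR : r ≤ R) (hf₀ : ∀ᵐ y ∂μ, 0 ≤ f y)
    (hf : ∀ᵐ y ∂μ.restrict (ball x R), f y ≤ c * ⨍ z in ball x R, f z ∂μ) :
    ∫ y in ball x r, f y ∂μ ≤ c * (r / R) ^ Module.finrank ℝ E * ∫ y in ball x R, f y ∂μ := by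
  have hR : 0 < R := hr.trans_le hrR
  have hball : μ.real (ball x R) ≠ 0 :=
    (ENNReal.toReal_pos (measure_ball_pos μ x hR).ne' measure_ball_lt_top.ne).ne'
  have hnorm : ∀ᵐ y ∂μ.restrict (ball x r), ‖f y‖ ≤ c * ⨍ z in ball x R, f z ∂μ := by
    filter_upwards [ae_restrict_of_ae_restrict_of_subset (ball_subset_ball hrR) hf,
      ae_restrict_of_ae hf₀] with y hy hy₀
    rwa [Real.norm_of_nonneg hy₀]
  calc ∫ y in ball x r, f y ∂μ ≤ ‖∫ y in ball x r, f y ∂μ‖ := Real.le_norm_self _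
    _ ≤ (c * ⨍ z in ball x R, f z ∂μ) * μ.real (ball x r) :=
      norm_setIntegral_le_of_norm_le_const_ae measure_ball_lt_top hnorm
    _ = c * (r / R) ^ Module.finrank ℝ E * ∫ y in ball x R, f y ∂μ := by
      rw [setAverage_eq, smul_eq_mul, Measure.addHaar_real_ball_eq_div_pow_mul μ x hr hR]
      field_simp

end AddHaar

theorem psiFun_nonneg {d : ℕ} {V : Ed d → ℝ} (hV₀ : ∀ᵐ y, 0 ≤ V y) (x : Ed d) {r : ℝ} (hr : 0 ≤ r) :
    0 ≤ psiFun d V x r :=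
  mul_nonneg (Real.rpow_nonneg hr _) (setIntegral_nonneg_of_ae hV₀)

theorem rpow_two_sub_mul_div_pow {r R : ℝ} (hr : 0 < r) (hR : 0 < R) (d : ℕ) :
    r ^ ((2 : ℝ) - d) * (r / R) ^ d = (r / R) ^ (2 : ℝ) * R ^ ((2 : ℝ) - d) := by
  have hrR : 0 < r / R := div_pos hr hR
  calc r ^ ((2 : ℝ) - d) * (r / R) ^ d
      = (r / R) ^ ((2 : ℝ) - d) * (r / R) ^ (d : ℝ) * R ^ ((2 : ℝ) - d) := by
        rw [Real.rpow_natCast, mul_right_comm, ← Real.mul_rpow hrR.le hR.le,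
          div_mul_cancel₀ r hR.ne']
    _ = (r / R) ^ (2 : ℝ) * R ^ ((2 : ℝ) - d) := by
        rw [← Real.rpow_add hrR, sub_add_cancel]

theorem psiFun_le_of_BInfty {d : ℕ} {C₀ : ℝ} {V : Ed d → ℝ} (hV : BInfty d C₀ V)
    (hV₀ : ∀ᵐ y, 0 ≤ V y) (x : Ed d) {r R : ℝ} (hr : 0 < r) (hrR : r ≤ R) :
    psiFun d V x r ≤ C₀ * (r / R) ^ (2 : ℝ) * psiFun d V x R := by
  have hR : 0 < R := hr.trans_le hrR
  have hmass := setIntegral_ball_le_of_ae_le_setAverage volume hr hrR hV₀ (hV x R hR)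
  rw [finrank_euclideanSpace_fin] at hmass
  calc psiFun d V x r ≤ r ^ ((2 : ℝ) - d) * (C₀ * (r / R) ^ d * ∫ y in ball x R, V y) :=
        mul_le_mul_of_nonneg_left hmass (Real.rpow_nonneg hr.le _)
    _ = C₀ * (r / R) ^ (2 : ℝ) * psiFun d V x R := by
        rw [psiFun]
        linear_combination (C₀ * ∫ y in ball x R, V y) * rpow_two_sub_mul_div_pow hr hR d

theorem stmt0_general (d : ℕ) (C₀ : ℝ) (hC₀ : 0 < C₀) (q : ℝ) (hq : 1 < q) :
    ∃ C > 0, ∀ V : Ed d → ℝ, GoodV d C₀ V →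
      ∀ (x : Ed d) (r R : ℝ), 0 < r → r ≤ R →
        psiFun d V x r ≤ C * (r / R) ^ ((2 : ℝ) - d / q) * psiFun d V x R := by
  refine ⟨C₀, hC₀, fun V ⟨_, _, hVpos, hV⟩ x r R hr hrR => ?_⟩
  have hV₀ : ∀ᵐ y, 0 ≤ V y := hVpos.mono fun _ h => h.le
  have hR : 0 < R := hr.trans_le hrR
  have hexp : (r / R) ^ (2 : ℝ) ≤ (r / R) ^ ((2 : ℝ) - d / q) :=
    Real.rpow_le_rpow_of_exponent_ge (div_pos hr hR) ((div_le_one hR).2 hrR)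
      (sub_le_self _ (div_nonneg d.cast_nonneg (zero_le_one.trans hq.le)))
  calc psiFun d V x r ≤ C₀ * (r / R) ^ (2 : ℝ) * psiFun d V x R := psiFun_le_of_BInfty hV hV₀ x hr hrR
    _ ≤ C₀ * (r / R) ^ ((2 : ℝ) - d / q) * psiFun d V x R := by
        gcongr
        exact psiFun_nonneg hV₀ x hR.le

/-- for every `q ∈ (1,∞)` there is `C = C(d,q,C₀) > 0` with
`ψ(x,r) ≤ C (r/R)^{2-d/q} ψ(x,R)` for all `x` and `0 < r ≤ R`. -/
theorem stmt0 (d : ℕ) (hd : 3 ≤ d) (C₀ : ℝ) (hC₀ : 0 < C₀) (q : ℝ) (hq : 1 < q) :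
    ∃ C > 0, ∀ V : Ed d → ℝ, GoodV d C₀ V →
      ∀ (x : Ed d) (r R : ℝ), 0 < r → r ≤ R →
        psiFun d V x r ≤ C * (r / R) ^ ((2 : ℝ) - d / q) * psiFun d V x R :=
  stmt0_general d C₀ hC₀ q hq
end
end

section
/- Let d ≥ 3 and let V be a B∞ potential with constant C₀ which is not almost everywhere zero. Then for every x ∈ ℝ^d one has 0 < m(x,V) < ∞, and there exists a constant C > 0, depending only on d and C₀, such that V(x) ≤ C m(x,V)² for almost every x ∈ ℝ^d. -/
open MeasureTheory Metric Set

noncomputable section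

/-- The Fefferman–Phong–Shen maximal function
`m(x,V) = inf { 1/r : r > 0, ψ(x,r) ≤ 1 }`. -/
def mFun (d : ℕ) (V : Ed d → ℝ) (x : Ed d) : ℝ :=
  sInf {s : ℝ | ∃ r : ℝ, 0 < r ∧ s = 1 / r ∧ psiFun d V x r ≤ 1}

/-!
Since `ψ(x,r) = |B₁| r² ⨍_{B(x,r)} V`, local boundedness makes `ψ(x,r) ≤ 1` for small `r`,
so `m(x,V) < ∞`. The `B∞` condition compares averages over concentric balls,
`⨍_{B(x,r)} V ≤ C₀ ⨍_{B(x,R)} V` for `r ≤ R`; hence `R² ψ(x,1) ≤ C₀` whenever `R ≥ 1` and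
`ψ(x,R) ≤ 1`, and as `ψ(x,1) > 0` the admissible radii are bounded, i.e. `m(x,V) > 0`.
Letting the inner ball shrink at a Lebesgue point gives `V(x) ≤ C₀ ⨍_{B(x,r)} V ≤ C₀ |B₁|⁻¹ r⁻²`
for every admissible `r`, and choosing `1/r < 2 m(x,V)` yields `V(x) ≤ 4 C₀ |B₁|⁻¹ m(x,V)²`.
-/

open Filter Topology

lemma locallyIntegrable_of_forall_ball_abs_le {X : Type*} [PseudoMetricSpace X]
    [MeasurableSpace X] [OpensMeasurableSpace X] {μ : Measure X} [IsLocallyFiniteMeasure μ]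
    {f : X → ℝ} (hf : AEStronglyMeasurable f μ) (h : ∀ x, ∃ r > 0, ∃ K : ℝ, ∀ y ∈ ball x r, |f y| ≤ K) :
    LocallyIntegrable f μ := by
  intro x
  obtain ⟨r, hr, K, hK⟩ := h x
  refine (μ.finiteAt_nhds x).integrableAtFilter hf.stronglyMeasurableAtFilter ⟨K, ?_⟩
  exact eventually_map.2 (eventually_of_mem (ball_mem_nhds x hr) hK)

lemma setAverage_le_of_ae_le {α : Type*} [MeasurableSpace α] {μ : Measure α} {s : Set α}
    {f : α → ℝ} {c : ℝ} (hs₀ : μ s ≠ 0) (hs : μ s ≠ ⊤) (hf : IntegrableOn f s μ)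
    (h : ∀ᵐ y ∂μ.restrict s, f y ≤ c) : ⨍ y in s, f y ∂μ ≤ c := by
  calc ⨍ y in s, f y ∂μ ≤ ⨍ _ in s, c ∂μ := by
        rw [setAverage_eq, setAverage_eq]
        exact smul_le_smul_of_nonneg_left
          (setIntegral_mono_ae_restrict hf (integrableOn_const hs) h) (by positivity)
    _ = c := setAverage_const hs₀ hs c

lemma MeasureTheory.LocallyIntegrable.integrableOn_ball {X : Type*} [PseudoMetricSpace X]
    [ProperSpace X] [MeasurableSpace X] {μ : Measure X} {f : X → ℝ}
    (hf : LocallyIntegrable f μ) (x : X) (r : ℝ) : IntegrableOn f (ball x r) μ :=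
  (hf.integrableOn_isCompact (isCompact_closedBall x r)).mono_set ball_subset_closedBall

section Psi

variable {d : ℕ} {V : Ed d → ℝ}

lemma measureReal_ball_eq (x : Ed d) {r : ℝ} (hr : 0 < r) :
    volume.real (ball x r) = r ^ d * volume.real (ball (0 : Ed d) 1) := by
  rw [measureReal_def, Measure.addHaar_ball_of_pos volume x hr, finrank_euclideanSpace_fin,
    ENNReal.toReal_mul, ENNReal.toReal_ofReal (by positivity), measureReal_def]

lemma measureReal_unitBall_pos : 0 < volume.real (ball (0 : Ed d) 1) :=
  ENNReal.toReal_pos (measure_ball_pos volume _ one_pos).ne' measure_ball_lt_top.ne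

lemma psiFun_eq_mul_setAverage (x : Ed d) {r : ℝ} (hr : 0 < r) :
    psiFun d V x r = volume.real (ball (0 : Ed d) 1) * r ^ 2 * ⨍ y in ball x r, V y := by
  have hc := (measureReal_unitBall_pos (d := d)).ne'
  rw [psiFun, setAverage_eq, smul_eq_mul, measureReal_ball_eq x hr, Real.rpow_sub hr,
    Real.rpow_natCast, Real.rpow_two]
  field_simp

lemma exists_psiFun_le_one (hV : LocallyIntegrable V volume) {x : Ed d}
    (hx : ∃ r > 0, ∃ K : ℝ, ∀ y ∈ ball x r, |V y| ≤ K) : ∃ r > 0, psiFun d V x r ≤ 1 := by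
  obtain ⟨r₀, hr₀, K, hK⟩ := hx
  set c := volume.real (ball (0 : Ed d) 1)
  have hlim : Tendsto (fun r : ℝ => c * r ^ 2 * K) (𝓝[>] 0) (𝓝 0) := by
    have : Continuous fun r : ℝ => c * r ^ 2 * K := by fun_prop
    simpa using (this.tendsto 0).mono_left nhdsWithin_le_nhds
  have hsmall : ∀ᶠ r in 𝓝[>] 0, r ∈ Ioo 0 r₀ ∧ c * r ^ 2 * K < 1 :=
    Eventually.and (Ioo_mem_nhdsGT hr₀) (hlim.eventually (gt_mem_nhds one_pos))
  obtain ⟨r, ⟨hr, hrr₀⟩, hcr⟩ := hsmall.exists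
  have havg : ⨍ y in ball x r, V y ≤ K :=
    setAverage_le_of_ae_le (measure_ball_pos volume x hr).ne' measure_ball_lt_top.ne
      (hV.integrableOn_ball x r) (ae_restrict_of_forall_mem measurableSet_ball
        fun y hy => (le_abs_self _).trans (hK y (ball_subset_ball hrr₀.le hy)))
  refine ⟨r, hr, ?_⟩
  rw [psiFun_eq_mul_setAverage x hr]
  calc c * r ^ 2 * ⨍ y in ball x r, V y ≤ c * r ^ 2 * K := by gcongr
    _ ≤ 1 := hcr.le

lemma psiFun_pos (hV : LocallyIntegrable V volume)
    (hpos : ∀ᵐ y : Ed d, 0 < V y) (x : Ed d) {r : ℝ} (hr : 0 < r) : 0 < psiFun d V x r := by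
  have hnull : volume (Function.support V)ᶜ = 0 :=
    measure_mono_null (fun y hy => by simp_all) (ae_iff.1 hpos)
  have hint : 0 < ∫ y in ball x r, V y := by
    rw [setIntegral_pos_iff_support_of_nonneg_ae
      (ae_restrict_of_ae (hpos.mono fun _ h => h.le)) (hV.integrableOn_ball x r),
      inter_comm, measure_inter_conull hnull]
    exact measure_ball_pos volume x hr
  exact mul_pos (Real.rpow_pos_of_pos hr _) hint

end Psi

namespace BInfty

variable {d : ℕ} {C₀ : ℝ} {V : Ed d → ℝ}

lemma setAverage_le (hB : BInfty d C₀ V) (hV : LocallyIntegrable V volume) {x : Ed d} {R : ℝ}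
    (hR : 0 < R) {s : Set (Ed d)} (hs : s ⊆ ball x R) (hs₀ : volume s ≠ 0) :
    ⨍ y in s, V y ≤ C₀ * ⨍ z in ball x R, V z :=
  setAverage_le_of_ae_le hs₀ ((measure_mono hs).trans_lt measure_ball_lt_top).ne
    ((hV.integrableOn_ball x R).mono_set hs)
    (ae_restrict_of_ae_restrict_of_subset hs (hB x R hR))

lemma ae_le_setAverage (hB : BInfty d C₀ V) (hV : LocallyIntegrable V volume) :
    ∀ᵐ x : Ed d, ∀ r > 0, V x ≤ C₀ * ⨍ z in ball x r, V z := by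
  filter_upwards [IsUnifLocDoublingMeasure.ae_tendsto_average (μ := volume) hV 1] with x hx
  intro r hr
  have hlim : Tendsto (fun s => ⨍ y in closedBall x s, V y) (𝓝[>] 0) (𝓝 (V x)) :=
    hx (fun _ => x) id tendsto_id
      (eventually_nhdsWithin_of_forall fun s hs => mem_closedBall_self (by simpa using hs.le))
  refine le_of_tendsto hlim ?_
  filter_upwards [Ioo_mem_nhdsGT hr] with s hs
  exact hB.setAverage_le hV hr (closedBall_subset_ball hs.2)
    (measure_closedBall_pos volume x hs.1).ne'

lemma psiFun_div_sq_le (hB : BInfty d C₀ V) (hV : LocallyIntegrable V volume) (x : Ed d)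
    {r R : ℝ} (hr : 0 < r) (hrR : r ≤ R) :
    psiFun d V x r / r ^ 2 ≤ C₀ * (psiFun d V x R / R ^ 2) := by
  have hR := hr.trans_le hrR
  have hc := measureReal_unitBall_pos (d := d)
  rw [psiFun_eq_mul_setAverage x hr, psiFun_eq_mul_setAverage x hR]
  field_simp
  exact hB.setAverage_le hV hR (ball_subset_ball hrR) (measure_ball_pos volume x hr).ne'

lemma exists_forall_psiFun_le_one_le (hB : BInfty d C₀ V) (hC₀ : 0 ≤ C₀)
    (hV : LocallyIntegrable V volume) (hpos : ∀ᵐ y : Ed d, 0 < V y) (x : Ed d) :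
    ∃ R, ∀ r > 0, psiFun d V x r ≤ 1 → r ≤ R := by
  have hψ₁ := psiFun_pos hV hpos x one_pos
  refine ⟨max 1 √(C₀ / psiFun d V x 1), fun r hr hψ => ?_⟩
  rcases le_total r 1 with hr1 | hr1
  · exact hr1.trans (le_max_left _ _)
  refine le_max_of_le_right ((Real.le_sqrt hr.le (by positivity)).2 ?_)
  rw [le_div_iff₀ hψ₁]
  have hcomp := hB.psiFun_div_sq_le hV x one_pos hr1
  rw [one_pow, div_one] at hcomp
  calc r ^ 2 * psiFun d V x 1 ≤ r ^ 2 * (C₀ * (psiFun d V x r / r ^ 2)) := by gcongr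
    _ = C₀ * psiFun d V x r := by field_simp
    _ ≤ C₀ := mul_le_of_le_one_right hC₀ hψ

lemma ae_le_div_sq (hB : BInfty d C₀ V) (hC₀ : 0 ≤ C₀) (hV : LocallyIntegrable V volume) :
    ∀ᵐ x : Ed d, ∀ r > 0, psiFun d V x r ≤ 1 →
      V x ≤ C₀ / volume.real (ball (0 : Ed d) 1) * (1 / r) ^ 2 := by
  filter_upwards [hB.ae_le_setAverage hV] with x hx r hr hψ
  have hc := measureReal_unitBall_pos (d := d)
  have havg : ⨍ y in ball x r, V y ≤ 1 / (volume.real (ball (0 : Ed d) 1) * r ^ 2) := by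
    rw [le_div_iff₀ (by positivity), mul_comm, ← psiFun_eq_mul_setAverage x hr]
    exact hψ
  calc V x ≤ C₀ * ⨍ y in ball x r, V y := hx r hr
    _ ≤ C₀ * (1 / (volume.real (ball (0 : Ed d) 1) * r ^ 2)) := by gcongr
    _ = C₀ / volume.real (ball (0 : Ed d) 1) * (1 / r) ^ 2 := by ring

end BInfty

section MaximalFunction

variable {d : ℕ} {V : Ed d → ℝ} {x : Ed d}

lemma mFun_pos (hne : ∃ r > 0, psiFun d V x r ≤ 1)
    (hbdd : ∃ R, ∀ r > 0, psiFun d V x r ≤ 1 → r ≤ R) : 0 < mFun d V x := by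
  obtain ⟨r₀, hr₀, hψ₀⟩ := hne
  obtain ⟨R, hR⟩ := hbdd
  have hRpos : 0 < R := hr₀.trans_le (hR r₀ hr₀ hψ₀)
  refine (one_div_pos.2 hRpos).trans_le (le_csInf ⟨1 / r₀, r₀, hr₀, rfl, hψ₀⟩ ?_)
  rintro _ ⟨r, hr, rfl, hψ⟩
  exact one_div_le_one_div_of_le hr (hR r hr hψ)

lemma exists_psiFun_le_one_of_mFun_lt (hne : ∃ r > 0, psiFun d V x r ≤ 1) {t : ℝ}
    (ht : mFun d V x < t) : ∃ r > 0, psiFun d V x r ≤ 1 ∧ 1 / r < t := by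
  obtain ⟨r₀, hr₀, hψ₀⟩ := hne
  rw [mFun] at ht
  obtain ⟨_, ⟨r, hr, rfl, hψ⟩, hlt⟩ :=
    exists_lt_of_csInf_lt (by exact ⟨1 / r₀, r₀, hr₀, rfl, hψ₀⟩) ht
  exact ⟨r, hr, hψ, hlt⟩

end MaximalFunction

theorem stmt1_general (d : ℕ) (C₀ : ℝ) (hC₀ : 0 < C₀) :
    ∃ C > 0, ∀ V : Ed d → ℝ, GoodV d C₀ V → ¬ (V =ᵐ[volume] 0) →
      (∀ x : Ed d, (∃ r > 0, psiFun d V x r ≤ 1) ∧ 0 < mFun d V x) ∧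
      (∀ᵐ x : Ed d ∂volume, V x ≤ C * (mFun d V x) ^ 2) := by
  have hc := measureReal_unitBall_pos (d := d)
  refine ⟨4 * C₀ / volume.real (ball (0 : Ed d) 1), by positivity, ?_⟩
  rintro V ⟨hmeas, hloc, hpos, hB⟩ -
  have hV : LocallyIntegrable V volume :=
    locallyIntegrable_of_forall_ball_abs_le hmeas.aestronglyMeasurable hloc
  have hne : ∀ x, ∃ r > 0, psiFun d V x r ≤ 1 := fun x => exists_psiFun_le_one hV (hloc x)
  have hm : ∀ x, 0 < mFun d V x := fun x =>
    mFun_pos (hne x) (hB.exists_forall_psiFun_le_one_le hC₀.le hV hpos x)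
  refine ⟨fun x => ⟨hne x, hm x⟩, ?_⟩
  filter_upwards [hB.ae_le_div_sq hC₀.le hV] with x hx
  obtain ⟨r, hr, hψ, hlt⟩ :=
    exists_psiFun_le_one_of_mFun_lt (hne x) (lt_two_mul_self (hm x))
  calc V x ≤ C₀ / volume.real (ball (0 : Ed d) 1) * (1 / r) ^ 2 := hx r hr hψ
    _ ≤ C₀ / volume.real (ball (0 : Ed d) 1) * (2 * mFun d V x) ^ 2 := by gcongr
    _ = 4 * C₀ / volume.real (ball (0 : Ed d) 1) * mFun d V x ^ 2 := by ring

/-- `0 < m(x,V) < ∞` for all `x` (finiteness being expressed by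
nonemptiness of the defining set), and `V(x) ≤ C m(x,V)²` a.e., with `C = C(d,C₀)`. -/
theorem stmt1 (d : ℕ) (hd : 3 ≤ d) (C₀ : ℝ) (hC₀ : 0 < C₀) :
    ∃ C > 0, ∀ V : Ed d → ℝ, GoodV d C₀ V → ¬ (V =ᵐ[volume] 0) →
      (∀ x : Ed d, (∃ r > 0, psiFun d V x r ≤ 1) ∧ 0 < mFun d V x) ∧
      (∀ᵐ x : Ed d ∂volume, V x ≤ C * (mFun d V x) ^ 2) :=
  stmt1_general d C₀ hC₀
end
end
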